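/- arXiv:1510.07772 — 4 statements merged into one kernel-verified Lean document; each statement's English description precedes it below -/
import Mathlib

section
/- For a nonzero parameter a ∈ F_q, the Dickson polynomial D_n(x, a) induces a permutation of F_q if and only if gcd(n, q² − 1) = 1. -/
open Polynomial

private lemma dicksonEval {R : Type*} [CommRing R] (b y z : R) (h : y * z = b) :
    ∀ m : ℕ, ((Polynomial.dickson 1 b m).eval (y + z)) = y ^ m + z ^ m
  | 0 => by subst h; simp [Polynomial.dickson_zero]; norm_num
  | 1 => by simp
  | (m + 2) => by
      subst h
      rw [Polynomial.dickson_add_two]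
      simp only [Polynomial.eval_sub, Polynomial.eval_mul, Polynomial.eval_X, Polynomial.eval_C,
        dicksonEval _ y z rfl m, dicksonEval _ y z rfl (m+1)]
      ring

private lemma dicksonAux (F : Type*) [Field F] [Fintype F] (Ω : Type*) [Field Ω]
    [IsAlgClosed Ω] [Algebra F Ω] (a : F) (ha : a ≠ 0) (n : ℕ) (hn : 0 < n) :
    Function.Bijective (fun x : F => (Polynomial.dickson 1 a n).eval x) ↔
      Nat.Coprime n (Fintype.card F ^ 2 - 1) := by
  classical
  set q := Fintype.card F with hq
  have hq2 : 2 ≤ q := Fintype.one_lt_card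
  obtain ⟨k, hrp, hk⟩ := FiniteField.card F (ringChar F)
  set r := ringChar F with hr
  haveI : Fact r.Prime := ⟨hrp⟩
  set ι : F →+* Ω := algebraMap F Ω with hιdef
  have hι : Function.Injective ι := ι.injective
  haveI : CharP Ω r := charP_of_injective_algebraMap hι r
  have hfrobA : ∀ u v : Ω, (u + v) ^ q = u ^ q + v ^ q := by
    intro u v; rw [hq.trans hk]; exact add_pow_char_pow u v r k
  have hfrobS : ∀ u v : Ω, (u - v) ^ q = u ^ q - v ^ q := by
    intro u v; rw [hq.trans hk]; exact sub_pow_char_pow u v k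
  have hfix : ∀ w : F, (ι w) ^ q = ι w := by
    intro w; rw [← map_pow, FiniteField.pow_card]
  have ha' : ι a ≠ 0 := fun h => ha (hι (by simpa using h))
  have hevalι : ∀ x : F, ι ((dickson 1 a n).eval x) = (dickson 1 (ι a) n).eval (ι x) := by
    intro x
    rw [← Polynomial.map_dickson ι, Polynomial.eval_map, Polynomial.eval₂_at_apply]
  -- elements fixed by the q-power map are in the range of ι
  have hrange : ∀ z : Ω, z ^ q = z → ∃ w : F, ι w = z := by
    intro z hz
    set P : Polynomial Ω := X ^ q - X with hP
    have hP0 : P ≠ 0 := by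
      intro h
      have h2 := congrArg (fun p => Polynomial.coeff p q) h
      simp only [hP, Polynomial.coeff_sub, Polynomial.coeff_X_pow, Polynomial.coeff_X,
        Polynomial.coeff_zero, if_pos rfl] at h2
      rw [if_neg (by omega : ¬ ((1:ℕ) = q)), sub_zero] at h2
      exact one_ne_zero h2
    have hPdeg : P.natDegree ≤ q := by
      refine le_trans (Polynomial.natDegree_sub_le _ _) ?_
      simp only [Polynomial.natDegree_X_pow, Polynomial.natDegree_X]
      omega
    have hroot : ∀ w : F, ι w ∈ P.roots := by
      intro w
      rw [Polynomial.mem_roots hP0]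
      simp [hP, Polynomial.IsRoot, hfix w]
    have hsub : Finset.univ.image (fun w : F => ι w) ⊆ P.roots.toFinset := by
      intro t ht
      simp only [Finset.mem_image] at ht
      obtain ⟨w, _, rfl⟩ := ht
      simpa using hroot w
    have hcard1 : (Finset.univ.image (fun w : F => ι w)).card = q := by
      rw [Finset.card_image_of_injective _ hι, Finset.card_univ]
    have hcard2 : P.roots.toFinset.card ≤ q :=
      le_trans (Multiset.toFinset_card_le _) (le_trans (Polynomial.card_roots' P) hPdeg)
    have heq : Finset.univ.image (fun w : F => ι w) = P.roots.toFinset :=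
      Finset.eq_of_subset_of_card_le hsub (by omega)
    have hzz : z ∈ P.roots.toFinset := by
      rw [Multiset.mem_toFinset, Polynomial.mem_roots hP0]
      simp [hP, Polynomial.IsRoot, hz]
    rw [← heq] at hzz
    obtain ⟨w, _, hw⟩ := Finset.mem_image.mp hzz
    exact ⟨w, hw⟩
  -- every x : F is of the form y + z with y z = ι a and y, z fixed by q² power
  have hquad : ∀ x : F, ∃ y z : Ω, y ≠ 0 ∧ z ≠ 0 ∧ y * z = ι a ∧ y + z = ι x ∧
      y ^ (q ^ 2) = y ∧ z ^ (q ^ 2) = z := by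
    intro x
    have hdeg : (X ^ 2 - C (ι x) * X + C (ι a) : Polynomial Ω).degree = 2 := by
      compute_degree!
    obtain ⟨y, hy⟩ := IsAlgClosed.exists_root _ (by rw [hdeg]; norm_num)
    have hy' : y ^ 2 - ι x * y + ι a = 0 := by
      simpa [Polynomial.IsRoot] using hy
    have hyne : y ≠ 0 := by rintro rfl; apply ha'; simpa using hy'
    have hmul : y * (ι x - y) = ι a := by linear_combination -hy'
    have hzne : ι x - y ≠ 0 := fun h => ha' (by rw [← hmul, h, mul_zero])
    have e1 : (y ^ 2) ^ q = (y ^ q) ^ 2 := by rw [← pow_mul, ← pow_mul, mul_comm]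
    have e2 : (ι x * y) ^ q = ι x * y ^ q := by rw [mul_pow, hfix]
    have hyq : (y ^ q) ^ 2 - ι x * (y ^ q) + ι a = 0 := by
      have h0 : (y ^ 2 - ι x * y + ι a) ^ q = 0 := by
        rw [hy']; exact zero_pow (by omega)
      rw [hfrobA, hfrobS, e1, e2, hfix] at h0
      exact h0
    have key : (y ^ q - y) * (y ^ q - (ι x - y)) = 0 := by linear_combination hyq + hmul
    have hqq : q * q = q ^ 2 := (sq q).symm
    rcases mul_eq_zero.mp key with h | h
    · have h1 : y ^ q = y := sub_eq_zero.mp h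
      have h2 : y ^ (q ^ 2) = y := by rw [← hqq, pow_mul, h1, h1]
      have h3 : (ι x - y) ^ q = ι x - y := by rw [hfrobS, hfix, h1]
      have h4 : (ι x - y) ^ (q ^ 2) = ι x - y := by rw [← hqq, pow_mul, h3, h3]
      exact ⟨y, ι x - y, hyne, hzne, hmul, by ring, h2, h4⟩
    · have h1 : y ^ q = ι x - y := sub_eq_zero.mp h
      have h5 : (ι x - y) * (ι x - y) ^ q = y * (ι x - y) := by
        calc (ι x - y) * (ι x - y) ^ q = y ^ q * (ι x - y) ^ q := by rw [h1]
          _ = (y * (ι x - y)) ^ q := by rw [mul_pow]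
          _ = (ι a) ^ q := by rw [hmul]
          _ = ι a := hfix a
          _ = y * (ι x - y) := hmul.symm
      have h6 : (ι x - y) ^ q = y := by
        have := mul_left_cancel₀ hzne (h5.trans (mul_comm _ _))
        exact this
      have h2 : y ^ (q ^ 2) = y := by rw [← hqq, pow_mul, h1, h6]
      have h4 : (ι x - y) ^ (q ^ 2) = ι x - y := by rw [← hqq, pow_mul, h6, h1]
      exact ⟨y, ι x - y, hyne, hzne, hmul, by ring, h2, h4⟩
  have hM4 : 4 ≤ q ^ 2 := by nlinarith
  constructor
  · -- bijective → coprime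
    intro hb
    by_contra hnc
    have hdn1 : Nat.gcd n (q ^ 2 - 1) ≠ 1 := hnc
    set p := (Nat.gcd n (q ^ 2 - 1)).minFac with hpdef
    have hp : p.Prime := Nat.minFac_prime hdn1
    have hple := hp.two_le
    have hpn : p ∣ n := (Nat.minFac_dvd _).trans (Nat.gcd_dvd_left _ _)
    have hpM : p ∣ q ^ 2 - 1 := (Nat.minFac_dvd _).trans (Nat.gcd_dvd_right _ _)
    have hrq : r ∣ q := by rw [hq.trans hk]; exact dvd_pow_self r k.2.ne'
    have hpr : p ≠ r := by
      intro hpe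
      have h1 : p ∣ q ^ 2 := by rw [hpe]; exact dvd_pow hrq two_ne_zero
      have h2 : p ∣ q ^ 2 - (q ^ 2 - 1) := Nat.dvd_sub h1 hpM
      rw [(by omega : q ^ 2 - (q ^ 2 - 1) = 1)] at h2
      exact hp.one_lt.ne' (Nat.dvd_one.mp h2)
    have hpOm : (p : Ω) ≠ 0 := by
      rw [Ne, CharP.cast_eq_zero_iff Ω r p]
      intro hdvd
      exact hpr ((Nat.prime_dvd_prime_iff_eq hrp hp).mp hdvd).symm
    haveI : NeZero (p : Ω) := ⟨hpOm⟩
    have hcdeg : (Polynomial.cyclotomic p Ω).degree ≠ 0 := by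
      rw [Polynomial.degree_cyclotomic, Nat.totient_prime hp]
      exact_mod_cast (by omega : ¬ (p - 1 = 0))
    obtain ⟨ζ, hζroot⟩ := IsAlgClosed.exists_root _ hcdeg
    have hprim : IsPrimitiveRoot ζ p := (Polynomial.isRoot_cyclotomic_iff).mp hζroot
    have hζp : ζ ^ p = 1 := hprim.pow_eq_one
    have hζ0 : ζ ≠ 0 := by
      rintro rfl
      rw [zero_pow hp.pos.ne'] at hζp
      exact zero_ne_one hζp
    have hζ1 : ζ ≠ 1 := by
      intro h
      have h1 := hprim.dvd_of_pow_eq_one 1 (by rw [pow_one, h])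
      have := Nat.le_of_dvd one_pos h1
      omega
    have hζn : ζ ^ n = 1 := by
      obtain ⟨m, hm⟩ := hpn
      rw [hm, pow_mul, hζp, one_pow]
    -- common closing step
    have final : ∀ y : Ω, y ≠ 0 → ζ * y ^ 2 ≠ ι a →
        (y + ι a * y⁻¹) ^ q = y + ι a * y⁻¹ →
        (ζ * y + ι a * (ζ * y)⁻¹) ^ q = ζ * y + ι a * (ζ * y)⁻¹ → False := by
      intro y hy0 hbad h1 h2
      obtain ⟨w₁, hw₁⟩ := hrange _ h1
      obtain ⟨w₂, hw₂⟩ := hrange _ h2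
      have hzy0 : ζ * y ≠ 0 := mul_ne_zero hζ0 hy0
      have hww : w₁ ≠ w₂ := by
        intro hwe
        apply hbad
        have he : y + ι a * y⁻¹ = ζ * y + ι a * (ζ * y)⁻¹ := by rw [← hw₁, ← hw₂, hwe]
        have eL : (y + ι a * y⁻¹) * (ζ * y) = ζ * y ^ 2 + ζ * ι a := by
          field_simp
        have eR : (ζ * y + ι a * (ζ * y)⁻¹) * (ζ * y) = ζ ^ 2 * y ^ 2 + ι a := by
          field_simp
        have e : ζ * y ^ 2 + ζ * ι a = ζ ^ 2 * y ^ 2 + ι a := by rw [← eL, ← eR, he]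
        have key2 : (1 - ζ) * (ζ * y ^ 2 - ι a) = 0 := by linear_combination e
        rcases mul_eq_zero.mp key2 with hc | hc
        · exact absurd (sub_eq_zero.mp hc).symm hζ1
        · exact sub_eq_zero.mp hc
      apply hww
      have c1 : y * (ι a * y⁻¹) = ι a := by
        field_simp
      have c2 : (ζ * y) * (ι a * (ζ * y)⁻¹) = ι a := by
        field_simp
      have heval : (fun x : F => (dickson 1 a n).eval x) w₁ =
          (fun x : F => (dickson 1 a n).eval x) w₂ := by
        show (dickson 1 a n).eval w₁ = (dickson 1 a n).eval w₂
        apply hι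
        rw [hevalι, hevalι, hw₁, hw₂]
        rw [dicksonEval (ι a) y (ι a * y⁻¹) c1 n,
            dicksonEval (ι a) (ζ * y) (ι a * (ζ * y)⁻¹) c2 n]
        have t1 : (ζ * y) ^ n = y ^ n := by rw [mul_pow, hζn, one_mul]
        have t2 : (ι a * (ζ * y)⁻¹) ^ n = (ι a * y⁻¹) ^ n := by
          rw [mul_pow, mul_pow, inv_pow, inv_pow, t1]
        rw [t1, t2]
      exact hb.injective heval
    -- the quadratic bounding the bad set
    have hgcoeff : (C ζ * X ^ 2 - C (ι a) : Polynomial Ω).coeff 2 = ζ := by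
      simp [Polynomial.coeff_C]
    have hgne : (C ζ * X ^ 2 - C (ι a) : Polynomial Ω) ≠ 0 := by
      intro hgz
      rw [hgz] at hgcoeff
      simp only [Polynomial.coeff_zero] at hgcoeff
      exact hζ0 hgcoeff.symm
    have hgdeg : (C ζ * X ^ 2 - C (ι a) : Polynomial Ω).natDegree ≤ 2 := by
      refine le_trans (Polynomial.natDegree_sub_le _ _) ?_
      refine max_le (le_trans (Polynomial.natDegree_mul_le) ?_) ?_ <;>
        simp [Polynomial.natDegree_C, Polynomial.natDegree_X_pow]
    have hc2 : ((C ζ * X ^ 2 - C (ι a) : Polynomial Ω).roots.toFinset).card ≤ 2 :=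
      le_trans (Multiset.toFinset_card_le _) (le_trans (Polynomial.card_roots' _) hgdeg)
    have hfact : q ^ 2 - 1 = (q - 1) * (q + 1) := by
      have h1 : (q - 1) * (q + 1) + 1 = q ^ 2 := by
        obtain ⟨m, hm⟩ := Nat.exists_eq_add_of_le hq2
        rw [hm, (by omega : 2 + m - 1 = m + 1)]
        ring
      exact Nat.sub_eq_of_eq_add h1.symm
    have hcases : p ∣ q - 1 ∨ p ∣ q + 1 := (Nat.Prime.dvd_mul hp).mp (by rw [← hfact]; exact hpM)
    have hqq2 : q * q = q ^ 2 := (sq q).symm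
    by_cases hB : p ∣ q + 1
    · -- case B : p ∣ q + 1
      have hζq1 : ζ ^ (q + 1) = 1 := by
        obtain ⟨m, hm⟩ := hB
        rw [hm, pow_mul, hζp, one_pow]
      have hζq : ζ ^ q = ζ⁻¹ := by
        have h1 : ζ ^ q * ζ = 1 := by rw [← pow_succ]; exact hζq1
        exact eq_inv_of_mul_eq_one_left h1
      set P2 : Polynomial Ω := X ^ (q + 1) - C (ι a) with hP2
      have hq1Om : ((q + 1 : ℕ) : Ω) ≠ 0 := by
        have hqOm : ((q : ℕ) : Ω) = 0 := by
          have h1 : ((q : ℕ) : Ω) = (r : Ω) ^ (k : ℕ) := by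
            rw [hq.trans hk]; push_cast; ring
          rw [h1, CharP.cast_eq_zero Ω r]
          exact zero_pow k.2.ne'
        push_cast
        rw [hqOm]
        simp
      have hsep : P2.Separable := Polynomial.separable_X_pow_sub_C (ι a) hq1Om ha'
      have hfdeg : P2.natDegree = q + 1 := Polynomial.natDegree_X_pow_sub_C
      have hP2ne : P2 ≠ 0 := fun hz => by
        rw [hz] at hfdeg; simp at hfdeg
      have hcardroots : Multiset.card P2.roots = q + 1 := by
        rw [← hfdeg]
        exact (Polynomial.splits_iff_card_roots).mp (IsAlgClosed.splits P2)
      have hcardfin : P2.roots.toFinset.card = q + 1 := by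
        rw [Multiset.toFinset_card_of_nodup (Polynomial.nodup_roots hsep), hcardroots]
      obtain ⟨y, hymem, hybad⟩ : ∃ y, y ∈ P2.roots.toFinset ∧ ζ * y ^ 2 ≠ ι a := by
        by_contra hall
        push_neg at hall
        have hsub : P2.roots.toFinset ⊆ (C ζ * X ^ 2 - C (ι a) : Polynomial Ω).roots.toFinset := by
          intro t ht
          rw [Multiset.mem_toFinset, Polynomial.mem_roots hgne]
          simp only [Polynomial.IsRoot, Polynomial.eval_sub, Polynomial.eval_mul,
            Polynomial.eval_pow, Polynomial.eval_X, Polynomial.eval_C]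
          rw [hall t ht]
          ring
        have := Finset.card_le_card hsub
        omega
      have hyroot : y ^ (q + 1) = ι a := by
        rw [Multiset.mem_toFinset, Polynomial.mem_roots hP2ne] at hymem
        have h1 : Polynomial.eval y P2 = 0 := hymem
        rw [hP2] at h1
        simp only [Polynomial.eval_sub, Polynomial.eval_pow, Polynomial.eval_X,
          Polynomial.eval_C] at h1
        exact sub_eq_zero.mp h1
      have hy0 : y ≠ 0 := by
        rintro rfl
        rw [zero_pow (by omega : q + 1 ≠ 0)] at hyroot
        exact ha' hyroot.symm
      have hyq : y ^ q = ι a * y⁻¹ := by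
        have h1 : y ^ q * y = ι a := by rw [← pow_succ]; exact hyroot
        exact (eq_mul_inv_iff_mul_eq₀ hy0).mpr h1
      have hyqq : y ^ (q ^ 2) = y := by
        have h1 : y ^ (q ^ 2) * y ^ q = y * y ^ q := by
          calc y ^ (q ^ 2) * y ^ q = y ^ (q ^ 2 + q) := (pow_add y _ _).symm
            _ = y ^ ((q + 1) * q) := by rw [(by ring : (q + 1) * q = q ^ 2 + q)]
            _ = (y ^ (q + 1)) ^ q := by rw [pow_mul]
            _ = (ι a) ^ q := by rw [hyroot]
            _ = ι a := hfix a
            _ = y ^ (q + 1) := hyroot.symm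
            _ = y * y ^ q := by rw [pow_succ]; ring
        exact mul_right_cancel₀ (pow_ne_zero q hy0) h1
      apply final y hy0 hybad
      · rw [← hyq, hfrobA, ← pow_mul, hqq2, hyqq]
        exact add_comm _ _
      · have e : ι a * (ζ * y)⁻¹ = ζ⁻¹ * y ^ q := by
          rw [hyq, mul_inv]
          ring
        rw [e, hfrobA, mul_pow, mul_pow, inv_pow, hζq, ← pow_mul, hqq2, hyqq, inv_inv]
        ring
    · -- case A : p ∣ q - 1, p odd
      have hA : p ∣ q - 1 := hcases.resolve_right hB
      have hζq : ζ ^ q = ζ := by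
        obtain ⟨m, hm⟩ := hA
        have h1 : ζ ^ (q - 1) = 1 := by rw [hm, pow_mul, hζp, one_pow]
        calc ζ ^ q = ζ ^ (q - 1 + 1) := by rw [(by omega : q - 1 + 1 = q)]
          _ = ζ ^ (q - 1) * ζ := pow_succ _ _
          _ = ζ := by rw [h1, one_mul]
      have hp2 : p ≠ 2 := by
        intro hpe
        apply hB
        rw [hpe] at hA ⊢
        omega
      have hq13 : 3 ≤ q - 1 := le_trans (by omega) (Nat.le_of_dvd (by omega) hA)
      obtain ⟨w, hw0, hwbad⟩ : ∃ w : F, w ≠ 0 ∧ ζ * (ι w) ^ 2 ≠ ι a := by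
        by_contra hall
        push_neg at hall
        have hsub : (Finset.univ.erase (0 : F)).image (fun w : F => ι w) ⊆
            (C ζ * X ^ 2 - C (ι a) : Polynomial Ω).roots.toFinset := by
          intro t ht
          simp only [Finset.mem_image, Finset.mem_erase] at ht
          obtain ⟨w, ⟨hw, _⟩, rfl⟩ := ht
          rw [Multiset.mem_toFinset, Polynomial.mem_roots hgne]
          simp only [Polynomial.IsRoot, Polynomial.eval_sub, Polynomial.eval_mul,
            Polynomial.eval_pow, Polynomial.eval_X, Polynomial.eval_C]
          rw [hall w hw]
          ring
        have hc1 : ((Finset.univ.erase (0 : F)).image (fun w : F => ι w)).card = q - 1 := by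
          rw [Finset.card_image_of_injective _ hι,
            Finset.card_erase_of_mem (Finset.mem_univ _), Finset.card_univ]
        have := Finset.card_le_card hsub
        omega
      have hy0 : ι w ≠ 0 := fun hh => hw0 (hι (by simpa using hh))
      apply final (ι w) hy0 hwbad
      · rw [hfrobA, mul_pow, inv_pow, hfix a, hfix w]
      · rw [hfrobA, mul_pow, mul_pow, inv_pow, mul_pow, hζq, hfix a, hfix w]
  · -- coprime → bijective
    intro hco
    rw [← Finite.injective_iff_bijective]
    have hpowinj : ∀ u v : Ω, u ≠ 0 → v ≠ 0 → u ^ (q ^ 2) = u → v ^ (q ^ 2) = v →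
        u ^ n = v ^ n → u = v := by
      intro u v hu hv hu2 hv2 h
      have hpow1 : ∀ w : Ω, w ≠ 0 → w ^ (q ^ 2) = w → w ^ (q ^ 2 - 1) = 1 := by
        intro w hw hw2
        have : w ^ (q ^ 2 - 1) * w = 1 * w := by
          rw [one_mul, ← pow_succ, (by omega : q ^ 2 - 1 + 1 = q ^ 2), hw2]
        exact mul_right_cancel₀ hw this
      have hg : (u / v) ^ n = 1 := by
        rw [div_pow, h, div_self (pow_ne_zero _ hv)]
      have hg2 : (u / v) ^ (q ^ 2 - 1) = 1 := by
        rw [div_pow, hpow1 u hu hu2, hpow1 v hv hv2, div_one]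
      have h1 : orderOf (u / v) ∣ Nat.gcd n (q ^ 2 - 1) :=
        Nat.dvd_gcd (orderOf_dvd_of_pow_eq_one hg) (orderOf_dvd_of_pow_eq_one hg2)
      rw [Nat.Coprime] at hco
      rw [hco, Nat.dvd_one, orderOf_eq_one_iff] at h1
      exact (div_eq_one_iff_eq hv).mp h1
    intro x₁ x₂ h
    simp only at h
    obtain ⟨y₁, z₁, hy₁, hz₁, hm₁, hs₁, hf₁, hg₁⟩ := hquad x₁
    obtain ⟨y₂, z₂, hy₂, hz₂, hm₂, hs₂, hf₂, hg₂⟩ := hquad x₂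
    have h' : y₁ ^ n + z₁ ^ n = y₂ ^ n + z₂ ^ n := by
      have e : (dickson 1 (ι a) n).eval (ι x₁) = (dickson 1 (ι a) n).eval (ι x₂) := by
        rw [← hevalι, ← hevalι, h]
      rw [← hs₁, ← hs₂, dicksonEval _ _ _ hm₁ n, dicksonEval _ _ _ hm₂ n] at e
      exact e
    have hmulpow : y₁ ^ n * z₁ ^ n = y₂ ^ n * z₂ ^ n := by
      rw [← mul_pow, ← mul_pow, hm₁, hm₂]
    have key : (y₂ ^ n - y₁ ^ n) * (y₂ ^ n - z₁ ^ n) = 0 := by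
      linear_combination (-(y₂ ^ n)) * h' + hmulpow
    rcases mul_eq_zero.mp key with hcase | hcase
    · have e1 : y₂ = y₁ := hpowinj _ _ hy₂ hy₁ hf₂ hf₁ (sub_eq_zero.mp hcase)
      have e2 : z₂ = z₁ := by
        apply mul_left_cancel₀ hy₁
        rw [hm₁, ← e1, hm₂]
      apply hι
      rw [← hs₁, ← hs₂, e1, e2]
    · have e1 : y₂ = z₁ := hpowinj _ _ hy₂ hz₁ hf₂ hg₁ (sub_eq_zero.mp hcase)
      have e2 : z₂ = y₁ := by
        apply mul_left_cancel₀ hz₁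
        have h3 : z₁ * z₂ = y₂ * z₂ := by rw [e1]
        rw [h3, hm₂, ← hm₁]
        ring
      apply hι
      rw [← hs₁, ← hs₂, e1, e2]
      ring

/-- For a nonzero parameter `a ∈ F_q`, the Dickson polynomial `D_n(x, a)` induces
a permutation of `F_q` iff `gcd(n, q² - 1) = 1`. -/
theorem stmt_8 (F : Type*) [Field F] [Fintype F] (a : F) (ha : a ≠ 0)
    (n : ℕ) (hn : 0 < n) :
    Function.Bijective (fun x : F => (Polynomial.dickson 1 a n).eval x) ↔
      Nat.Coprime n (Fintype.card F ^ 2 - 1) :=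
  dicksonAux F (AlgebraicClosure F) a ha n hn
end

section
/- Let α_1, …, α_r be nonzero elements of a field K of characteristic zero, and let n ≥ 2. Suppose β_1, …, β_s are nonzero elements of K with s > r such that ∑_{i=1}^r α_i t/(1 − (α_i t)^{n−1}) = ∑_{j=1}^s β_j t/(1 − (β_j t)^{n−1}) as formal power series (equivalently, ∑_i α_i^m = ∑_j β_j^m for all m ≡ 1 mod (n−1)). Then there exist indices 1 ≤ i < j ≤ s with β_i^{n−1} = β_j^{n−1}. -/
/-- If a finite weighted sum of power functions vanishes for all exponents,
then all the weights vanish. -/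
lemma vand_aux {K : Type*} [Field K] (T : Finset K) (c : K → K)
    (h : ∀ k : ℕ, ∑ γ ∈ T, c γ * γ ^ k = 0) : ∀ γ ∈ T, c γ = 0 := by
  classical
  intro γ hγ
  set Q : Polynomial K := ∏ γ' ∈ T.erase γ, (Polynomial.X - Polynomial.C γ') with hQ
  have hsum : ∑ γ' ∈ T, c γ' * Q.eval γ' = 0 := by
    have hc : ∀ γ' ∈ T, c γ' * Q.eval γ' =
        ∑ k ∈ Finset.range (Q.natDegree + 1), Q.coeff k * (c γ' * γ' ^ k) := by
      intro γ' _
      rw [Polynomial.eval_eq_sum_range, Finset.mul_sum]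
      exact Finset.sum_congr rfl fun k _ => by ring
    rw [Finset.sum_congr rfl hc, Finset.sum_comm]
    simp only [← Finset.mul_sum, h, mul_zero, Finset.sum_const_zero]
  have heval : ∀ γ' ∈ T.erase γ, c γ' * Q.eval γ' = 0 := by
    intro γ' hγ'
    have hz : Q.eval γ' = 0 := by
      rw [hQ, Polynomial.eval_prod]
      exact Finset.prod_eq_zero hγ' (by simp)
    simp [hz]
  have hmain : c γ * Q.eval γ = 0 := by
    rw [← Finset.add_sum_erase T _ hγ, Finset.sum_eq_zero heval, add_zero] at hsum
    exact hsum
  have hQγ : Q.eval γ ≠ 0 := by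
    rw [hQ, Polynomial.eval_prod]
    refine Finset.prod_ne_zero_iff.mpr ?_
    intro γ' hγ'
    simp only [Polynomial.eval_sub, Polynomial.eval_X, Polynomial.eval_C, sub_ne_zero]
    exact (Finset.ne_of_mem_erase hγ').symm
  exact (mul_eq_zero.mp hmain).resolve_right hQγ

/-- Let `α_1, …, α_r` and `β_1, …, β_s` be nonzero elements of an algebraically
closed field of characteristic zero with `s > r` and `n ≥ 2`.  If
`∑ α_i^m = ∑ β_j^m` for every `m ≡ 1 (mod n-1)`, then two of the `β_j` have the
same `(n-1)`-st power. -/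
theorem stmt_11 {K : Type*} [Field K] [CharZero K] [IsAlgClosed K]
    (n : ℕ) (hn : 2 ≤ n) (r s : ℕ) (hrs : r < s)
    (α : Fin r → K) (β : Fin s → K) (hα : ∀ i, α i ≠ 0) (hβ : ∀ j, β j ≠ 0)
    (h : ∀ m : ℕ, 1 ≤ m → m % (n - 1) = 1 % (n - 1) →
      ∑ i, α i ^ m = ∑ j, β j ^ m) :
    ∃ i j : Fin s, i < j ∧ β i ^ (n - 1) = β j ^ (n - 1) := by
  classical
  by_contra hcon
  push_neg at hcon
  set e := n - 1 with he
  -- injectivity of j ↦ β j ^ e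
  have hinj : Function.Injective (fun j : Fin s => β j ^ e) := by
    intro i j hij
    by_contra hne
    rcases lt_or_gt_of_ne hne with hlt | hlt
    · exact hcon i j hlt hij
    · exact hcon j i hlt hij.symm
  -- the key power-sum identities
  have hk : ∀ k : ℕ, ∑ i, α i * (α i ^ e) ^ k = ∑ j, β j * (β j ^ e) ^ k := by
    intro k
    have hm1 : 1 ≤ 1 + e * k := Nat.le_add_right 1 _
    have hm2 : (1 + e * k) % e = 1 % e := Nat.add_mul_mod_self_left 1 e k
    have := h (1 + e * k) hm1 hm2
    simpa [pow_add, pow_mul] using this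
  -- the finite set of values and coefficient function
  set Ta : Finset K := Finset.image (fun i => α i ^ e) Finset.univ with hTa
  set Tb : Finset K := Finset.image (fun j => β j ^ e) Finset.univ with hTb
  set T : Finset K := Ta ∪ Tb with hT
  set c : K → K := fun γ =>
    (∑ i ∈ Finset.univ.filter (fun i => α i ^ e = γ), α i) -
    (∑ j ∈ Finset.univ.filter (fun j => β j ^ e = γ), β j) with hc
  have hczero : ∀ γ ∈ T, c γ = 0 := by
    apply vand_aux
    intro k
    have hmapsα : ∀ i ∈ (Finset.univ : Finset (Fin r)), α i ^ e ∈ T := by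
      intro i _
      exact Finset.mem_union_left _ (Finset.mem_image_of_mem _ (Finset.mem_univ i))
    have hmapsβ : ∀ j ∈ (Finset.univ : Finset (Fin s)), β j ^ e ∈ T := by
      intro j _
      exact Finset.mem_union_right _ (Finset.mem_image_of_mem _ (Finset.mem_univ j))
    have hα' : ∑ γ ∈ T, (∑ i ∈ Finset.univ.filter (fun i => α i ^ e = γ), α i) * γ ^ k
        = ∑ i, α i * (α i ^ e) ^ k := by
      rw [← Finset.sum_fiberwise_of_maps_to hmapsα (fun i => α i * (α i ^ e) ^ k)]
      refine Finset.sum_congr rfl fun γ _ => ?_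
      rw [Finset.sum_mul]
      refine Finset.sum_congr rfl fun i hi => ?_
      rw [(Finset.mem_filter.mp hi).2]
    have hβ' : ∑ γ ∈ T, (∑ j ∈ Finset.univ.filter (fun j => β j ^ e = γ), β j) * γ ^ k
        = ∑ j, β j * (β j ^ e) ^ k := by
      rw [← Finset.sum_fiberwise_of_maps_to hmapsβ (fun j => β j * (β j ^ e) ^ k)]
      refine Finset.sum_congr rfl fun γ _ => ?_
      rw [Finset.sum_mul]
      refine Finset.sum_congr rfl fun j hj => ?_
      rw [(Finset.mem_filter.mp hj).2]
    calc ∑ γ ∈ T, c γ * γ ^ k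
        = ∑ γ ∈ T, ((∑ i ∈ Finset.univ.filter (fun i => α i ^ e = γ), α i) * γ ^ k
          - (∑ j ∈ Finset.univ.filter (fun j => β j ^ e = γ), β j) * γ ^ k) := by
          refine Finset.sum_congr rfl fun γ _ => ?_
          rw [hc]; ring
      _ = 0 := by rw [Finset.sum_sub_distrib, hα', hβ', hk k, sub_self]
  -- each β-value must be an α-value
  have hsub : Tb ⊆ Ta := by
    intro γ hγ
    rcases Finset.mem_image.mp hγ with ⟨j, _, hj⟩
    have hγT : γ ∈ T := Finset.mem_union_right _ hγ
    have hc0 := hczero γ hγT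
    have hfib : Finset.univ.filter (fun j' : Fin s => β j' ^ e = γ) = {j} := by
      ext j'
      simp only [Finset.mem_filter, Finset.mem_univ, true_and, Finset.mem_singleton]
      constructor
      · intro hj'; exact hinj (by show β j' ^ e = β j ^ e; rw [hj', hj])
      · intro hj'; rw [hj', hj]
    simp only [hc] at hc0
    rw [hfib, Finset.sum_singleton, sub_eq_zero] at hc0
    have hne : (Finset.univ.filter (fun i : Fin r => α i ^ e = γ)).Nonempty := by
      rcases Finset.eq_empty_or_nonempty (Finset.univ.filter (fun i : Fin r => α i ^ e = γ)) with hemp | hne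
      · rw [hemp, Finset.sum_empty] at hc0
        exact absurd hc0.symm (hβ j)
      · exact hne
    rcases hne with ⟨i, hi⟩
    have := (Finset.mem_filter.mp hi).2
    exact Finset.mem_image.mpr ⟨i, Finset.mem_univ i, this⟩
  -- cardinality contradiction
  have h1 : Tb.card = s := by
    rw [hTb, Finset.card_image_of_injective _ hinj, Finset.card_univ, Fintype.card_fin]
  have h2 : Ta.card ≤ r := by
    calc Ta.card ≤ (Finset.univ : Finset (Fin r)).card := Finset.card_image_le
      _ = r := by rw [Finset.card_univ, Fintype.card_fin]
  have := Finset.card_le_card hsub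
  omega
end

section
/- Let f: V → W be an injective linear map between finite-dimensional vector spaces, and let F: V → V, G: W → W be endomorphisms with f ∘ F = G ∘ f. Then det(1 − t·F) divides det(1 − t·G). -/
open Polynomial Module Module.Free Matrix

/-- The charpoly of the restriction of an endomorphism to an invariant submodule divides
the charpoly. -/
theorem charpoly_restrict_dvd_aux {k W : Type*} [Field k]
    [AddCommGroup W] [Module k W] [FiniteDimensional k W]
    (G : W →ₗ[k] W) (p : Submodule k W) (hp : ∀ x ∈ p, G x ∈ p) :
    (LinearMap.restrict G hp).charpoly ∣ G.charpoly := by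
  classical
  obtain ⟨q, hq⟩ := Submodule.exists_isCompl p
  let e : (p × q) ≃ₗ[k] W := Submodule.prodEquivOfIsCompl p q hq
  let T : (p × q) →ₗ[k] (p × q) := (e.symm.conj G)
  have hT : T.charpoly = G.charpoly := LinearEquiv.charpoly_conj e.symm G
  let bp := chooseBasis k p
  let bq := chooseBasis k q
  let b := bp.prod bq
  let M := LinearMap.toMatrix b b T
  have hTinl : ∀ x : p, T (x, 0) = ((⟨G x, hp x x.2⟩ : p), 0) := by
    intro x
    show e.symm (G (e (x, 0))) = _
    have h1 : e (x, 0) = (x : W) := by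
      simp [e, Submodule.coe_prodEquivOfIsCompl']
    rw [h1]
    have h2 := Submodule.prodEquivOfIsCompl_symm_apply_left (p := p) (q := q) hq
      (⟨G ↑x, hp x x.2⟩ : p)
    exact h2
  have h21 : M.toBlocks₂₁ = 0 := by
    ext i j
    simp only [Matrix.toBlocks₂₁, Matrix.of_apply, Matrix.zero_apply, M,
      LinearMap.toMatrix_apply]
    rw [show b (Sum.inl j) = (bp j, 0) from by simp [b], hTinl]
    simp [b]
  have hblock : M = Matrix.fromBlocks M.toBlocks₁₁ M.toBlocks₁₂ 0 M.toBlocks₂₂ := by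
    rw [← h21, Matrix.fromBlocks_toBlocks M]
  have hA : M.toBlocks₁₁ = LinearMap.toMatrix bp bp (LinearMap.restrict G hp) := by
    ext i j
    simp only [Matrix.toBlocks₁₁, Matrix.of_apply, M, LinearMap.toMatrix_apply]
    rw [show b (Sum.inl j) = (bp j, 0) from by simp [b], hTinl]
    simp [b, LinearMap.restrict_apply]
  have hM : M.charpoly = T.charpoly := LinearMap.charpoly_toMatrix T b
  have : M.charpoly = (LinearMap.restrict G hp).charpoly * M.toBlocks₂₂.charpoly := by
    rw [hblock, Matrix.charpoly_fromBlocks_zero₂₁, ← hblock, hA,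
      LinearMap.charpoly_toMatrix]
  rw [← hT, ← hM, this]
  exact Dvd.intro _ rfl

/-- If `f : V → W` is injective and intertwines `F : V → V` with `G : W → W`
(`f ∘ F = G ∘ f`), then `det(1 - t·F)` divides `det(1 - t·G)`. -/
theorem stmt_13 {k V W : Type*} [Field k]
    [AddCommGroup V] [Module k V] [FiniteDimensional k V]
    [AddCommGroup W] [Module k W] [FiniteDimensional k W]
    (f : V →ₗ[k] W) (hf : Function.Injective f)
    (F : V →ₗ[k] V) (G : W →ₗ[k] W) (h : f ∘ₗ F = G ∘ₗ f) :
    (LinearMap.charpoly F).reverse ∣ (LinearMap.charpoly G).reverse := by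
  classical
  set p := LinearMap.range f with hp
  have hinv : ∀ x ∈ p, G x ∈ p := by
    rintro _ ⟨v, rfl⟩
    exact ⟨F v, by simpa using DFunLike.congr_fun h v⟩
  let e : V ≃ₗ[k] p := LinearEquiv.ofInjective f hf
  have he : e.conj F = LinearMap.restrict G hinv := by
    apply LinearMap.ext; intro x
    apply Subtype.ext
    show (e (F (e.symm x)) : W) = G x
    have h1 : ∀ v : V, (e v : W) = f v := fun v => rfl
    rw [h1, ← LinearMap.comp_apply, h, LinearMap.comp_apply]
    congr 1
    have := e.apply_symm_apply x
    calc f (e.symm x) = (e (e.symm x) : W) := rfl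
      _ = (x : W) := by rw [this]
  have hFG : F.charpoly ∣ G.charpoly := by
    rw [← LinearEquiv.charpoly_conj e F, he]
    exact charpoly_restrict_dvd_aux G p hinv
  obtain ⟨c, hc⟩ := hFG
  have hFm : F.charpoly.Monic := LinearMap.charpoly_monic F
  have hGm : G.charpoly.Monic := LinearMap.charpoly_monic G
  have hcm : c.Monic := by
    have := hGm
    rw [hc] at this
    exact hFm.of_mul_monic_left this
  rw [hc, Polynomial.reverse_mul (by simp [hFm.leadingCoeff, hcm.leadingCoeff])]
  exact Dvd.intro _ rfl
end

section
/- Let n be an odd prime, q a prime power with gcd(n, q − 1) = 1 (respectively gcd(n, q² − 1) = 1), and a = 0 (respectively a ≠ 0) in F_q. Then for every m of the form m = (n−1)s + 1 with s ≥ 0, the Dickson polynomial D_n(x, a) induces a permutation of the extension field F_{q^m}. -/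
/-!
Write `Q = #E`. Every `x ∈ E` is `y + z` with `y * z = a`, where `y, z` are the roots of
`T² - x T + a`; Frobenius permutes them, so they lie in `𝔽_{Q²}`, and `D_n(x, a) = yⁿ + zⁿ`.
As `yⁿ, zⁿ` are the roots of `T² - D_n(x, a) T + aⁿ` and `u ↦ uⁿ` is injective on `𝔽_{Q²}` when
`gcd(n, Q² - 1) = 1`, the value `D_n(x, a)` determines `{y, z}` and hence `x`. For `a = 0`,
`D_n(x, 0) = xⁿ`. Finally `Q = q ^ ((n - 1) s + 1) ≡ q (mod n)` by Fermat, so the coprimality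
hypotheses over `𝔽_q` carry over to `𝔽_Q`.
-/

open Polynomial

theorem Polynomial.dickson_one_eval_add {R : Type*} [CommRing R] (x y : R) :
    ∀ n, (dickson 1 (x * y) n).eval (x + y) = x ^ n + y ^ n
  | 0 => by simp only [dickson_zero, pow_zero]; norm_num
  | 1 => by simp only [dickson_one, eval_X, pow_one]
  | n + 2 => by
    simp only [dickson_add_two, eval_sub, eval_mul, eval_X, eval_C, dickson_one_eval_add x y n,
      dickson_one_eval_add x y (n + 1)]
    ring

theorem Polynomial.dickson_one_zero_eval {R : Type*} [CommRing R] {n : ℕ} (hn : n ≠ 0) (x : R) :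
    (dickson 1 (0 : R) n).eval x = x ^ n := by
  simpa [zero_pow hn] using dickson_one_eval_add x 0 n

theorem eq_or_eq_of_add_eq_add_of_mul_eq_mul {R : Type*} [CommRing R] [NoZeroDivisors R]
    {x₁ y₁ x₂ y₂ : R} (hadd : x₁ + y₁ = x₂ + y₂) (hmul : x₁ * y₁ = x₂ * y₂) :
    x₂ = x₁ ∨ x₂ = y₁ := by
  have : (x₂ - x₁) * (x₂ - y₁) = 0 := by linear_combination x₂ * hadd.symm + hmul
  simpa [sub_eq_zero] using this

theorem injOn_pow_of_coprime {G₀ : Type*} [CommGroupWithZero G₀] {n N : ℕ} (hn : n ≠ 0)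
    (hnN : n.Coprime N) : Set.InjOn (· ^ n) {u : G₀ | u ^ (N + 1) = u} := by
  intro u hu v hv (h : u ^ n = v ^ n)
  rcases eq_or_ne v 0 with rfl | hv0
  · rwa [zero_pow hn, pow_eq_zero_iff hn] at h
  have hu0 : u ≠ 0 := by
    rintro rfl
    rw [zero_pow hn, eq_comm, pow_eq_zero_iff hn] at h
    exact hv0 h
  have pow_eq_one {w : G₀} (hw0 : w ≠ 0) (hw : w ^ (N + 1) = w) : w ^ N = 1 := by
    rwa [pow_succ, mul_eq_right₀ hw0] at hw
  rw [← div_eq_one_iff_eq hv0, ← pow_eq_one_iff_of_coprime hnN, div_pow, div_pow, h,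
    div_self (pow_ne_zero _ hv0), pow_eq_one hu0 hu, pow_eq_one hv0 hv, div_one]
  exact ⟨rfl, rfl⟩

theorem pow_injective_of_coprime_card_sub_one {K : Type*} [Field K] [Fintype K] {n : ℕ}
    (hn : n ≠ 0) (h : n.Coprime (Fintype.card K - 1)) : Function.Injective fun x : K => x ^ n := by
  intro x y hxy
  refine injOn_pow_of_coprime hn h ?_ ?_ hxy <;>
    simp only [Set.mem_ofPred_eq, Nat.sub_add_cancel Fintype.card_pos, FiniteField.pow_card]

theorem pow_card_sq_eq_self_of_add_eq_of_mul_eq {E L : Type*} [Field E] [Fintype E] [CommRing L]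
    [IsDomain L] [Algebra E L] {x a : E} {y z : L} (hadd : y + z = algebraMap E L x)
    (hmul : y * z = algebraMap E L a) : y ^ (Fintype.card E ^ 2) = y := by
  set φ := FiniteField.frobeniusAlgHom E L
  have hφadd : φ y + φ z = algebraMap E L x := by rw [← map_add, hadd, AlgHom.commutes]
  have hφmul : φ y * φ z = algebraMap E L a := by rw [← map_mul, hmul, AlgHom.commutes]
  have hφφ : φ (φ y) = y := by
    rcases eq_or_eq_of_add_eq_add_of_mul_eq_mul (hadd.trans hφadd.symm)
      (hmul.trans hφmul.symm) with hy | hy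
    · rw [hy, hy]
    · have hφz : φ z = y := by linear_combination hφadd - hadd - hy
      rw [hy, hφz]
  simpa [φ, sq, pow_mul] using hφφ

theorem IsAlgClosed.exists_add_eq_mul_eq (L : Type*) [Field L] [IsAlgClosed L] (x a : L) :
    ∃ y z : L, y + z = x ∧ y * z = a := by
  have hdeg : (X ^ 2 - C x * X + C a : L[X]).degree ≠ 0 := by
    rw [show (X ^ 2 - C x * X + C a : L[X]).degree = 2 by compute_degree!]
    decide
  obtain ⟨y, hy⟩ := IsAlgClosed.exists_root _ hdeg
  refine ⟨y, x - y, add_sub_cancel y x, ?_⟩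
  simp only [IsRoot, eval_add, eval_sub, eval_mul, eval_pow, eval_X, eval_C] at hy
  linear_combination -hy

theorem Polynomial.dickson_one_eval_injective_of_coprime_card_sq_sub_one {E : Type*} [Field E]
    [Fintype E] {n : ℕ} (hn : n ≠ 0) (h : n.Coprime (Fintype.card E ^ 2 - 1)) (a : E) :
    Function.Injective fun x : E => (dickson 1 a n).eval x := by
  let L := AlgebraicClosure E
  have hQ : Fintype.card E ^ 2 - 1 + 1 = Fintype.card E ^ 2 :=
    Nat.sub_add_cancel (Nat.one_le_pow _ _ Fintype.card_pos)
  have hinj := injOn_pow_of_coprime (G₀ := L) hn h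
  rw [hQ] at hinj
  have hsplit (x : E) : ∃ y z : L, y + z = algebraMap E L x ∧ y * z = algebraMap E L a ∧
      y ^ Fintype.card E ^ 2 = y ∧ z ^ Fintype.card E ^ 2 = z ∧
      algebraMap E L ((dickson 1 a n).eval x) = y ^ n + z ^ n := by
    obtain ⟨y, z, hadd, hmul⟩ := IsAlgClosed.exists_add_eq_mul_eq L (algebraMap E L x)
      (algebraMap E L a)
    refine ⟨y, z, hadd, hmul, pow_card_sq_eq_self_of_add_eq_of_mul_eq hadd hmul,
      pow_card_sq_eq_self_of_add_eq_of_mul_eq ((add_comm z y).trans hadd)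
        ((mul_comm z y).trans hmul), ?_⟩
    rw [← eval₂_at_apply, ← eval_map, map_dickson, ← hadd, ← hmul, dickson_one_eval_add]
  intro x₁ x₂ hx
  obtain ⟨y₁, z₁, hadd₁, hmul₁, hy₁, hz₁, hD₁⟩ := hsplit x₁
  obtain ⟨y₂, z₂, hadd₂, hmul₂, hy₂, hz₂, hD₂⟩ := hsplit x₂
  have hD : y₁ ^ n + z₁ ^ n = y₂ ^ n + z₂ ^ n := by
    rw [← hD₁, ← hD₂]
    exact congrArg _ hx
  have hN : y₁ ^ n * z₁ ^ n = y₂ ^ n * z₂ ^ n := by rw [← mul_pow, ← mul_pow, hmul₁, hmul₂]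
  apply (algebraMap E L).injective
  rw [← hadd₁, ← hadd₂]
  rcases eq_or_eq_of_add_eq_add_of_mul_eq_mul hD hN with hy | hy
  · rw [hy, add_right_inj] at hD
    rw [hinj hy₂ hy₁ hy, hinj hz₂ hz₁ hD.symm]
  · rw [hy, add_comm, add_right_inj] at hD
    rw [hinj hy₂ hz₁ hy, hinj hz₂ hy₁ hD.symm, add_comm]

theorem Nat.pow_sub_one_mul_add_one_modEq_self {p : ℕ} (hp : p.Prime) (q s : ℕ) :
    q ^ ((p - 1) * s + 1) ≡ q [MOD p] := by
  have : Fact p.Prime := ⟨hp⟩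
  rw [← ZMod.natCast_eq_natCast_iff, Nat.cast_pow]
  by_cases hq : (q : ZMod p) = 0
  · rw [hq, zero_pow (Nat.succ_ne_zero _)]
  · rw [pow_add, pow_mul, ZMod.pow_card_sub_one_eq_one hq, one_pow, one_mul, pow_one]

theorem Nat.Coprime.pow_sub_one_of_modEq {n q r : ℕ} (hqr : q ≡ r [MOD n]) (hq : q ≠ 0)
    (hr : r ≠ 0) {t : ℕ} (h : n.Coprime (q ^ t - 1)) : n.Coprime (r ^ t - 1) := by
  have := ((hqr.pow t).sub_right (Nat.one_le_pow _ _ (Nat.pos_of_ne_zero hq))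
    (Nat.one_le_pow _ _ (Nat.pos_of_ne_zero hr))).gcd_eq
  rw [Nat.coprime_comm] at h ⊢
  rwa [Nat.Coprime, ← this]

theorem stmt_19_general (n : ℕ) (hn : n.Prime)
    (F E : Type*) [Field F] [Fintype F] [Field E] [Fintype E] [Algebra F E]
    (a : F)
    (h : (a = 0 ∧ Nat.Coprime n (Fintype.card F - 1)) ∨
         (a ≠ 0 ∧ Nat.Coprime n (Fintype.card F ^ 2 - 1)))
    (s : ℕ) (hm : Module.finrank F E = (n - 1) * s + 1) :
    Function.Bijective fun x : E => (Polynomial.dickson 1 (algebraMap F E a) n).eval x := by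
  have hcard : Fintype.card F ≡ Fintype.card E [MOD n] := by
    rw [Module.card_eq_pow_finrank (K := F) (V := E), hm]
    exact (Nat.pow_sub_one_mul_add_one_modEq_self hn _ s).symm
  have hcoprime {t : ℕ} (ht : n.Coprime (Fintype.card F ^ t - 1)) :
      n.Coprime (Fintype.card E ^ t - 1) :=
    ht.pow_sub_one_of_modEq hcard Fintype.card_ne_zero Fintype.card_ne_zero
  rw [← Finite.injective_iff_bijective]
  rcases h with ⟨rfl, hcop⟩ | ⟨-, hcop⟩
  · simp only [map_zero, dickson_one_zero_eval hn.ne_zero]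
    have hcopE := hcoprime (t := 1) (by rwa [pow_one])
    rw [pow_one] at hcopE
    exact pow_injective_of_coprime_card_sub_one hn.ne_zero hcopE
  · exact dickson_one_eval_injective_of_coprime_card_sq_sub_one hn.ne_zero (hcoprime hcop) _

/-- Let `n` be an odd prime and `a ∈ F_q` with `gcd(n, q-1) = 1` if `a = 0`
(resp. `gcd(n, q²-1) = 1` if `a ≠ 0`).  Then for every `m = (n-1)s + 1` with
`s ≥ 0`, the Dickson polynomial `D_n(x, a)` permutes the extension `F_{q^m}`. -/
theorem stmt_19 (n : ℕ) (hn : n.Prime) (hodd : Odd n)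
    (F E : Type*) [Field F] [Fintype F] [Field E] [Fintype E] [Algebra F E]
    (a : F)
    (h : (a = 0 ∧ Nat.Coprime n (Fintype.card F - 1)) ∨
         (a ≠ 0 ∧ Nat.Coprime n (Fintype.card F ^ 2 - 1)))
    (s : ℕ) (hm : Module.finrank F E = (n - 1) * s + 1) :
    Function.Bijective fun x : E => (Polynomial.dickson 1 (algebraMap F E a) n).eval x :=
  stmt_19_general n hn F E a h s hm
end
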